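/- (Modified hypercontractive inequality) Let n ≥ 1, let 0 ≤ ρ ≤ 1, let q > 1, and let 0 ≤ λ ≤ 1 satisfy ρ^λ · √(q−1) ≤ 1 (with 0^0 = 1). Then for every f : {-1,1}^n → ℝ, ‖T_ρ f‖_q ≤ ‖T_ρ f‖₂^{1−λ} · ‖f‖₂^{λ}. -/

import Mathlib

noncomputable section

/-- The real value `±1` associated with a Boolean coordinate (`true ↦ 1`, `false ↦ -1`). -/
def sgn (b : Bool) : ℝ := if b then 1 else -1

/-- Expectation over the uniform probability measure on the hypercube `{-1,1}^n`,
identified with `Fin n → Bool`. -/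
def cubeExpect {n : ℕ} (f : (Fin n → Bool) → ℝ) : ℝ :=
  (∑ x : Fin n → Bool, f x) / 2 ^ n

/-- The Fourier character `χ_S(x) = ∏_{i ∈ S} x_i`. -/
def chi {n : ℕ} (S : Finset (Fin n)) (x : Fin n → Bool) : ℝ :=
  ∏ i ∈ S, sgn (x i)

/-- The Fourier coefficient `f̂(S) = E[f(x) χ_S(x)]`. -/
def fourierCoef {n : ℕ} (f : (Fin n → Bool) → ℝ) (S : Finset (Fin n)) : ℝ :=
  cubeExpect fun x => f x * chi S x

/-- The noise operator `T_ρ f = Σ_S ρ^{|S|} f̂(S) χ_S` (with `0^0 = 1`). -/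
def noiseOp {n : ℕ} (ρ : ℝ) (f : (Fin n → Bool) → ℝ) (x : Fin n → Bool) : ℝ :=
  ∑ S : Finset (Fin n), ρ ^ S.card * fourierCoef f S * chi S x

/-- The normalized `ℓ_p` norm `‖f‖_p = (E |f|^p)^{1/p}`. -/
def cubeNorm {n : ℕ} (p : ℝ) (f : (Fin n → Bool) → ℝ) : ℝ :=
  (cubeExpect fun x => |f x| ^ p) ^ (1 / p)

/-- `x` with its `i`-th coordinate negated. -/
def flipAt {n : ℕ} (x : Fin n → Bool) (i : Fin n) : Fin n → Bool :=
  Function.update x i (!(x i))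

/-- The Dirichlet form `D(f,g) = ½ E_{x,i}[(f(x) − f(x^{⊕i}))(g(x) − g(x^{⊕i}))]`,
with `x` uniform on the cube and `i` uniform on the coordinates. -/
def dirichletForm {n : ℕ} (f g : (Fin n → Bool) → ℝ) : ℝ :=
  (1/2) * cubeExpect fun x =>
    (∑ i : Fin n, (f x - f (flipAt x i)) * (g x - g (flipAt x i))) / n

/-- The entropy `Ent(g) = E[g log g] − (E g) log (E g)` (with `0 log 0 = 0`,
as `Real.log 0 = 0`). -/
def cubeEntropy {n : ℕ} (g : (Fin n → Bool) → ℝ) : ℝ :=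
  cubeExpect (fun x => g x * Real.log (g x)) - cubeExpect g * Real.log (cubeExpect g)

/-- The variance `Var(f) = E[f²] − (E f)²`. -/
def cubeVar {n : ℕ} (f : (Fin n → Bool) → ℝ) : ℝ :=
  cubeExpect (fun x => f x ^ 2) - (cubeExpect f) ^ 2

/-- The influence of coordinate `i`: `Inf_i(f) = Σ_{S ∋ i} f̂(S)²`. -/
def influence {n : ℕ} (i : Fin n) (f : (Fin n → Bool) → ℝ) : ℝ :=
  ∑ S ∈ Finset.univ.filter (fun S : Finset (Fin n) => i ∈ S), fourierCoef f S ^ 2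

/-!
Write `ρ = r s` with `r = ρ^λ` and `s = ρ^(1-λ)`, so that `T_ρ = T_r T_s`. Replacing `q` by
`max q 2` (the norms `‖·‖_q` increase with `q`), we have `r² (q - 1) ≤ 1`, and Bonami's
hypercontractive inequality gives `‖T_ρ f‖_q ≤ ‖T_s f‖₂`. By Parseval,
`‖T_s f‖₂² = Σ_S (ρ^(2|S|))^(1-λ) f̂(S)²`, which Hölder's inequality bounds by
`(Σ_S ρ^(2|S|) f̂(S)²)^(1-λ) (Σ_S f̂(S)²)^λ = ‖T_ρ f‖₂^(2(1-λ)) ‖f‖₂^(2λ)`.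

Bonami's inequality `‖T_r f‖_q ≤ ‖f‖₂` (for `q ≥ 2`, `r² (q - 1) ≤ 1`) goes by induction on the
dimension: splitting off one coordinate writes `T_r f` as `A ± r B`, where `A` and `B` are
noise operators applied to functions of one variable fewer; the two-point inequality
`|a + r b|^q + |a - r b|^q ≤ 2 (a² + b²)^(q/2)`, Minkowski's inequality in `L^(q/2)` and the
induction hypothesis close the step. The two-point inequality reduces to
`(1 + t)^q + (1 - t)^q ≤ 2 (1 + (q - 1) t²)^(q/2)` for `t ∈ [0, 1]`, where the logarithm of the
ratio of the two sides is monotone in `t`.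
-/

open Real Finset Set

lemma le_of_hasDerivAt_nonneg {g g' : ℝ → ℝ} {a b : ℝ} (hab : a ≤ b)
    (hg : ∀ u ∈ Icc a b, HasDerivAt g (g' u) u) (hg' : ∀ u ∈ Ioo a b, 0 ≤ g' u) :
    g a ≤ g b := by
  refine monotoneOn_of_hasDerivWithinAt_nonneg (convex_Icc a b)
    (fun u hu => (hg u hu).continuousAt.continuousWithinAt)
    (fun u hu => (hg u (interior_subset hu)).hasDerivWithinAt) (fun u hu => ?_)
    (left_mem_Icc.2 hab) (right_mem_Icc.2 hab) hab
  exact hg' u (by rwa [interior_Icc] at hu)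

lemma one_sub_mul_mul_one_add_rpow_le {p t : ℝ} (hp : 1 ≤ p) (ht0 : 0 ≤ t) (ht1 : t ≤ 1) :
    (1 - p * t) * (1 + t) ^ p ≤ (1 + p * t) * (1 - t) ^ p := by
  rcases le_or_gt 1 (p * t) with hpt | hpt
  · nlinarith [rpow_nonneg (by linarith : 0 ≤ 1 + t) p, rpow_nonneg (by linarith : 0 ≤ 1 - t) p]
  have hpos : ∀ u ∈ Icc 0 t, 0 < 1 + p * u ∧ 0 < 1 - p * u ∧ 0 < 1 - u ∧ 0 < 1 + u := by
    rintro u ⟨hu0, hut⟩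
    refine ⟨by nlinarith, by nlinarith, by nlinarith, by linarith⟩
  -- the logarithm of the ratio of the two sides is nondecreasing in `t` and vanishes at `0`
  have hmono := le_of_hasDerivAt_nonneg
    (g := fun u => log (1 + p * u) + p * log (1 - u) - log (1 - p * u) - p * log (1 + u))
    (g' := fun u => 2 * p / ((1 - p * u) * (1 + p * u)) - 2 * p / ((1 - u) * (1 + u)))
    ht0 (fun u hu => by
      obtain ⟨h1, h2, h3, h4⟩ := hpos u hu
      have d := ((((hasDerivAt_id u).const_mul p).const_add 1).log h1.ne').add
        (((((hasDerivAt_id u).neg).const_add 1).log h3.ne').const_mul p)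
        |>.sub ((((hasDerivAt_id u).const_mul p).neg.const_add 1).log h2.ne')
        |>.sub (((((hasDerivAt_id u).const_add 1)).log h4.ne').const_mul p)
      refine d.congr_deriv ?_
      simp only [id, Pi.neg_apply, ← sub_eq_add_neg]
      field_simp [h1.ne', h2.ne', h3.ne', h4.ne']
      ring)
    (fun u hu => by
      obtain ⟨h1, h2, h3, h4⟩ := hpos u (Ioo_subset_Icc_self hu)
      have hle : (1 - p * u) * (1 + p * u) ≤ (1 - u) * (1 + u) := by
        nlinarith [mul_nonneg (sq_nonneg u) (by nlinarith : 0 ≤ p ^ 2 - 1)]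
      have := div_le_div_of_nonneg_left (by linarith : 0 ≤ 2 * p) (by nlinarith) hle
      linarith)
  obtain ⟨h1, h2, h3, h4⟩ := hpos t ⟨ht0, le_rfl⟩
  simp only [mul_zero, add_zero, sub_zero, log_one] at hmono
  rw [← log_le_log_iff (by positivity) (by positivity), log_mul h2.ne' (by positivity),
    log_mul h1.ne' (by positivity), log_rpow h4, log_rpow h3]
  linarith

lemma one_add_rpow_add_one_sub_rpow_le {q t : ℝ} (hq : 2 ≤ q) (ht0 : 0 ≤ t) (ht1 : t ≤ 1) :
    (1 + t) ^ q + (1 - t) ^ q ≤ 2 * (1 + (q - 1) * t ^ 2) ^ (q / 2) := by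
  have hG : ∀ u ∈ Icc (0 : ℝ) 1, 0 < (1 + u) ^ q + (1 - u) ^ q := fun u ⟨hu0, hu1⟩ =>
    add_pos_of_pos_of_nonneg (rpow_pos_of_pos (by linarith) q) (rpow_nonneg (by linarith) q)
  have hX : ∀ u : ℝ, 0 < 1 + (q - 1) * u ^ 2 := fun u => by nlinarith [sq_nonneg u]
  have hmono := le_of_hasDerivAt_nonneg
    (g := fun u => log 2 + q / 2 * log (1 + (q - 1) * u ^ 2) - log ((1 + u) ^ q + (1 - u) ^ q))
    (g' := fun u => q * (q - 1) * u / (1 + (q - 1) * u ^ 2)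
      - q * ((1 + u) ^ (q - 1) - (1 - u) ^ (q - 1)) / ((1 + u) ^ q + (1 - u) ^ q))
    ht0 (fun u hu => by
      have hu : u ∈ Icc (0 : ℝ) 1 := ⟨hu.1, hu.2.trans ht1⟩
      have hplus := ((hasDerivAt_id u).const_add 1).rpow_const (p := q) (Or.inr (by linarith))
      have hminus := ((hasDerivAt_id u).neg.const_add 1).rpow_const (p := q) (Or.inr (by linarith))
      have d := (((((hasDerivAt_pow 2 u).const_mul (q - 1)).const_add 1).log (hX u).ne').const_mul
        (q / 2)).const_add (log 2) |>.sub ((hplus.add hminus).log (hG u hu).ne')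
      refine d.congr_deriv ?_
      simp only [id, Pi.add_apply, Pi.neg_apply, ← sub_eq_add_neg]
      field_simp
      ring) (fun u ⟨hu0, hu1⟩ => by
      have hu :=
        one_sub_mul_mul_one_add_rpow_le (p := q - 1) (by linarith) hu0.le (hu1.le.trans ht1)
      have ha : (1 + u) ^ q = (1 + u) * (1 + u) ^ (q - 1) := by
        rw [← rpow_one_add' (by linarith) (by linarith)]; ring_nf
      have hb : (1 - u) ^ q = (1 - u) * (1 - u) ^ (q - 1) := by
        rw [← rpow_one_add' (by linarith) (by linarith)]; ring_nf
      rw [sub_nonneg, div_le_div_iff₀ (hG u ⟨hu0.le, hu1.le.trans ht1⟩) (hX u), ha, hb]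
      nlinarith)
  norm_num at hmono
  have hXq := rpow_pos_of_pos (hX t) (q / 2)
  rw [← log_le_log_iff (hG t ⟨ht0, ht1⟩) (mul_pos two_pos hXq), log_mul two_ne_zero hXq.ne',
    log_rpow (hX t)]
  linarith

lemma sq_rpow_div_two (a : ℝ) (q : ℝ) : (a ^ 2) ^ (q / 2) = |a| ^ q := by
  rw [← sq_abs, ← rpow_natCast, ← rpow_mul (abs_nonneg a)]
  ring_nf

lemma add_rpow_add_sub_rpow_le {q a c : ℝ} (hq : 2 ≤ q) (hc : 0 ≤ c) (hca : c ≤ a) :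
    (a + c) ^ q + (a - c) ^ q ≤ 2 * (a ^ 2 + (q - 1) * c ^ 2) ^ (q / 2) := by
  obtain rfl | ha := (hc.trans hca).eq_or_lt
  · obtain rfl : c = 0 := le_antisymm hca hc
    simp [zero_rpow (by linarith : q ≠ 0), zero_rpow (by linarith : q / 2 ≠ 0)]
  obtain ⟨t, rfl⟩ : ∃ t, c = a * t := ⟨c / a, by field_simp⟩
  have ht0 : 0 ≤ t := nonneg_of_mul_nonneg_right hc ha
  have ht1 : t ≤ 1 := by nlinarith
  calc (a + a * t) ^ q + (a - a * t) ^ q = a ^ q * ((1 + t) ^ q + (1 - t) ^ q) := by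
        rw [show a + a * t = a * (1 + t) by ring, show a - a * t = a * (1 - t) by ring,
          mul_rpow ha.le (by linarith), mul_rpow ha.le (by linarith), mul_add]
    _ ≤ a ^ q * (2 * (1 + (q - 1) * t ^ 2) ^ (q / 2)) :=
        mul_le_mul_of_nonneg_left (one_add_rpow_add_one_sub_rpow_le hq ht0 ht1)
          (rpow_nonneg ha.le q)
    _ = 2 * (a ^ 2 + (q - 1) * (a * t) ^ 2) ^ (q / 2) := by
        rw [show a ^ 2 + (q - 1) * (a * t) ^ 2 = a ^ 2 * (1 + (q - 1) * t ^ 2) by ring,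
          mul_rpow (sq_nonneg a) (by nlinarith), sq_rpow_div_two, abs_of_pos ha]
        ring

lemma abs_add_rpow_add_abs_sub_rpow_le {q : ℝ} (hq : 2 ≤ q) (a c : ℝ) :
    |a + c| ^ q + |a - c| ^ q ≤ 2 * (a ^ 2 + (q - 1) * c ^ 2) ^ (q / 2) := by
  wlog ha : 0 ≤ a generalizing a c
  · have := this (-a) (-c) (by linarith)
    rwa [← neg_add, neg_sub_neg, abs_neg, abs_sub_comm, neg_sq, neg_sq] at this
  wlog hc : 0 ≤ c generalizing c
  · have := this (-c) (by linarith)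
    rwa [← sub_eq_add_neg, sub_neg_eq_add, neg_sq, add_comm (|a - c| ^ q)] at this
  wlog hca : c ≤ a generalizing a c
  · have := this c hc a ha (by linarith)
    rw [add_comm c a, abs_sub_comm] at this
    refine this.trans (mul_le_mul_of_nonneg_left (rpow_le_rpow (by nlinarith) ?_ (by linarith))
      two_pos.le)
    nlinarith [mul_nonneg (by linarith : 0 ≤ q - 2) (by nlinarith : 0 ≤ c ^ 2 - a ^ 2)]
  rw [abs_of_nonneg (by linarith), abs_of_nonneg (by linarith)]
  exact add_rpow_add_sub_rpow_le hq hc hca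

lemma abs_add_mul_rpow_add_abs_sub_mul_rpow_le {q r : ℝ} (hq : 2 ≤ q) (hr : r ^ 2 * (q - 1) ≤ 1)
    (a b : ℝ) : |a + r * b| ^ q + |a - r * b| ^ q ≤ 2 * (a ^ 2 + b ^ 2) ^ (q / 2) :=
  (abs_add_rpow_add_abs_sub_rpow_le hq a (r * b)).trans <| by
    gcongr 2 * (a ^ 2 + ?_) ^ _
    · nlinarith [sq_nonneg (r * b)]
    · linear_combination (b ^ 2) * hr

lemma sum_rpow_one_sub_mul_le {ι : Type*} (s : Finset ι) {w c : ι → ℝ} (hw : ∀ i, 0 ≤ w i)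
    (hc : ∀ i, 0 ≤ c i) {lam : ℝ} (hlam0 : 0 ≤ lam) (hlam1 : lam ≤ 1) :
    ∑ i ∈ s, w i ^ (1 - lam) * c i ≤ (∑ i ∈ s, w i * c i) ^ (1 - lam) * (∑ i ∈ s, c i) ^ lam := by
  obtain rfl | hlam1 := hlam1.eq_or_lt
  · simp
  have hp : 1 ≤ (1 - lam)⁻¹ := one_le_inv₀ (by linarith) |>.2 (by linarith)
  have := inner_le_weight_mul_Lp_of_nonneg s hp c (fun i => w i ^ (1 - lam)) hc
    fun i => rpow_nonneg (hw i) _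
  simp only [inv_inv, ← rpow_mul (hw _), mul_inv_cancel₀ (by linarith : 1 - lam ≠ 0), rpow_one,
    sub_sub_cancel] at this
  simpa only [mul_comm (c _), mul_comm ((∑ i ∈ s, c i) ^ lam)] using this

section Cube

variable {n : ℕ}

lemma cubeExpect_nonneg {f : (Fin n → Bool) → ℝ} (h : ∀ x, 0 ≤ f x) : 0 ≤ cubeExpect f :=
  div_nonneg (sum_nonneg fun x _ => h x) (by positivity)

lemma cubeExpect_mono {f g : (Fin n → Bool) → ℝ} (h : ∀ x, f x ≤ g x) :
    cubeExpect f ≤ cubeExpect g :=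
  div_le_div_of_nonneg_right (sum_le_sum fun x _ => h x) (by positivity)

lemma cubeExpect_add (f g : (Fin n → Bool) → ℝ) :
    cubeExpect (fun x => f x + g x) = cubeExpect f + cubeExpect g := by
  simp only [cubeExpect, sum_add_distrib, add_div]

lemma cubeExpect_const_mul (c : ℝ) (f : (Fin n → Bool) → ℝ) :
    cubeExpect (fun x => c * f x) = c * cubeExpect f := by
  simp only [cubeExpect, ← mul_sum, mul_div_assoc]

lemma cubeExpect_sum {ι : Type*} (s : Finset ι) (g : ι → (Fin n → Bool) → ℝ) :
    cubeExpect (fun x => ∑ i ∈ s, g i x) = ∑ i ∈ s, cubeExpect (g i) := by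
  simp only [cubeExpect, ← sum_div, sum_comm (s := s)]

lemma cubeExpect_eq_sum_mul (f : (Fin n → Bool) → ℝ) :
    cubeExpect f = ∑ x, (2 ^ n)⁻¹ * f x := by
  rw [cubeExpect, ← mul_sum, div_eq_inv_mul]

lemma cubeExpect_prod (g : Fin n → Bool → ℝ) :
    cubeExpect (fun x => ∏ i, g i (x i)) = ∏ i, (g i true + g i false) / 2 := by
  rw [cubeExpect, ← Fintype.prod_sum, prod_div_distrib, prod_const, card_univ, Fintype.card_fin]
  simp

lemma cubeExpect_succ (g : (Fin (n + 1) → Bool) → ℝ) :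
    cubeExpect g = (cubeExpect (fun x => g (Fin.cons true x))
      + cubeExpect (fun x => g (Fin.cons false x))) / 2 := by
  simp only [cubeExpect, ← (Fin.consEquiv fun _ => Bool).sum_comp g, Fintype.sum_prod_type,
    Fintype.sum_bool, pow_succ]
  field_simp
  rfl

lemma cubeExpect_div_const (f : (Fin n → Bool) → ℝ) (c : ℝ) :
    cubeExpect (fun x => f x / c) = cubeExpect f / c := by
  simp only [cubeExpect, ← sum_div, div_right_comm]

lemma cubeExpect_sq_succ (f : (Fin (n + 1) → Bool) → ℝ) :
    cubeExpect (fun x => ((f (Fin.cons true x) + f (Fin.cons false x)) / 2) ^ 2)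
      + cubeExpect (fun x => ((f (Fin.cons true x) - f (Fin.cons false x)) / 2) ^ 2)
      = cubeExpect fun z => f z ^ 2 := by
  rw [cubeExpect_succ (fun z => f z ^ 2), ← cubeExpect_add, ← cubeExpect_add,
    ← cubeExpect_div_const]
  congr 1
  funext x
  ring

lemma cubeExpect_add_rpow_le {p : ℝ} (hp : 1 ≤ p) {u v : (Fin n → Bool) → ℝ}
    (hu : ∀ x, 0 ≤ u x) (hv : ∀ x, 0 ≤ v x) :
    (cubeExpect fun x => (u x + v x) ^ p) ^ (1 / p)
      ≤ (cubeExpect fun x => u x ^ p) ^ (1 / p) + (cubeExpect fun x => v x ^ p) ^ (1 / p) := by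
  have hsum : ∀ w : (Fin n → Bool) → ℝ, (∀ x, 0 ≤ w x) → 0 ≤ ∑ x, w x ^ p :=
    fun w hw => sum_nonneg fun x _ => rpow_nonneg (hw x) p
  have hN : (0 : ℝ) ≤ 2 ^ n := by positivity
  simp only [cubeExpect, div_rpow (hsum _ fun x => add_nonneg (hu x) (hv x)) hN,
    div_rpow (hsum u hu) hN, div_rpow (hsum v hv) hN, ← add_div]
  exact div_le_div_of_nonneg_right
    (Lp_add_le_of_nonneg univ hp (fun x _ => hu x) (fun x _ => hv x)) (by positivity)

end Cube

section Fourier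

variable {n : ℕ}

lemma chi_eq_prod (S : Finset (Fin n)) (x : Fin n → Bool) :
    chi S x = ∏ i, if i ∈ S then sgn (x i) else 1 :=
  (Fintype.prod_ite_mem S _).symm

lemma cubeExpect_chi_mul_chi (S T : Finset (Fin n)) :
    cubeExpect (fun x => chi S x * chi T x) = if S = T then 1 else 0 := by
  have hfactor : ∀ i, ((if i ∈ S then sgn true else 1) * (if i ∈ T then sgn true else 1)
      + (if i ∈ S then sgn false else 1) * (if i ∈ T then sgn false else 1)) / 2
      = if (i ∈ S ↔ i ∈ T) then 1 else 0 := fun i => by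
    by_cases hS : i ∈ S <;> by_cases hT : i ∈ T <;> simp [sgn, hS, hT]
  simp only [chi_eq_prod, ← prod_mul_distrib]
  rw [cubeExpect_prod (fun i b => (if i ∈ S then sgn b else 1) * (if i ∈ T then sgn b else 1)),
    Fintype.prod_congr _ _ hfactor, Fintype.prod_boole]
  simp only [← Finset.ext_iff]

lemma fourierCoef_sum_mul_chi (c : Finset (Fin n) → ℝ) (T : Finset (Fin n)) :
    fourierCoef (fun x => ∑ S, c S * chi S x) T = c T := by
  simp only [fourierCoef, sum_mul, mul_assoc, cubeExpect_sum, cubeExpect_const_mul,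
    cubeExpect_chi_mul_chi, mul_ite, mul_one, mul_zero, Fintype.sum_ite_eq']

lemma fourierCoef_noiseOp (r : ℝ) (f : (Fin n → Bool) → ℝ) (T : Finset (Fin n)) :
    fourierCoef (noiseOp r f) T = r ^ T.card * fourierCoef f T :=
  fourierCoef_sum_mul_chi (fun S => r ^ S.card * fourierCoef f S) T

lemma noiseOp_noiseOp (r s : ℝ) (f : (Fin n → Bool) → ℝ) :
    noiseOp r (noiseOp s f) = noiseOp (r * s) f := by
  funext x
  simp only [noiseOp, fourierCoef_noiseOp, mul_pow, mul_assoc]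

def noiseKernel (r : ℝ) (x y : Fin n → Bool) : ℝ :=
  ∏ i, (1 + r * sgn (x i) * sgn (y i))

lemma noiseKernel_eq_sum (r : ℝ) (x y : Fin n → Bool) :
    noiseKernel r x y = ∑ S, r ^ S.card * chi S x * chi S y := by
  rw [noiseKernel, Fintype.prod_congr _ _ fun i => add_comm 1 _, Fintype.prod_add]
  simp only [prod_const_one, mul_one, chi, prod_mul_distrib, prod_const]

lemma noiseOp_eq_cubeExpect_mul_noiseKernel (r : ℝ) (f : (Fin n → Bool) → ℝ)
    (x : Fin n → Bool) : noiseOp r f x = cubeExpect fun y => f y * noiseKernel r x y := by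
  simp only [noiseKernel_eq_sum, mul_sum, cubeExpect_sum, noiseOp, fourierCoef,
    ← cubeExpect_const_mul]
  refine sum_congr rfl fun S _ => ?_
  rw [mul_comm, ← cubeExpect_const_mul]
  congr 1
  funext y
  ring

lemma noiseKernel_one (x y : Fin n → Bool) :
    noiseKernel 1 x y = if x = y then 2 ^ n else 0 := by
  have hfactor : ∀ i, 1 + 1 * sgn (x i) * sgn (y i) = if x i = y i then 2 else 0 := fun i => by
    cases x i <;> cases y i <;> simp [sgn] <;> norm_num
  simp only [noiseKernel, hfactor, Fintype.prod_ite_zero, prod_const, card_univ,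
    Fintype.card_fin, funext_iff]

lemma noiseOp_one (f : (Fin n → Bool) → ℝ) : noiseOp 1 f = f := by
  funext x
  simp [noiseOp_eq_cubeExpect_mul_noiseKernel, noiseKernel_one, cubeExpect]

lemma sum_fourierCoef_mul_chi (f : (Fin n → Bool) → ℝ) (x : Fin n → Bool) :
    ∑ S, fourierCoef f S * chi S x = f x := by
  simpa [noiseOp] using congrFun (noiseOp_one f) x

lemma cubeExpect_sq_eq_sum_fourierCoef_sq (f : (Fin n → Bool) → ℝ) :
    cubeExpect (fun x => f x ^ 2) = ∑ S, fourierCoef f S ^ 2 := by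
  calc cubeExpect (fun x => f x ^ 2)
      = cubeExpect (fun x => ∑ S, fourierCoef f S * (f x * chi S x)) := by
        congr 1
        funext x
        conv_lhs => rw [sq]; enter [2]; rw [← sum_fourierCoef_mul_chi f x]
        simp only [mul_sum]
        ring_nf
    _ = ∑ S, fourierCoef f S ^ 2 := by
        simp only [cubeExpect_sum, cubeExpect_const_mul, fourierCoef, sq]

lemma cubeExpect_sq_noiseOp (r : ℝ) (f : (Fin n → Bool) → ℝ) :
    cubeExpect (fun x => noiseOp r f x ^ 2) = ∑ S, (r ^ S.card) ^ 2 * fourierCoef f S ^ 2 := by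
  simp only [cubeExpect_sq_eq_sum_fourierCoef_sq, fourierCoef_noiseOp, mul_pow]

lemma noiseKernel_cons (r : ℝ) (b c : Bool) (x y : Fin n → Bool) :
    noiseKernel r (Fin.cons b x) (Fin.cons c y) = (1 + r * sgn b * sgn c) * noiseKernel r x y := by
  simp [noiseKernel, Fin.prod_univ_succ]

lemma noiseOp_cons (r : ℝ) (f : (Fin (n + 1) → Bool) → ℝ) (b : Bool) (x : Fin n → Bool) :
    noiseOp r f (Fin.cons b x)
      = noiseOp r (fun y => (f (Fin.cons true y) + f (Fin.cons false y)) / 2) x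
        + r * sgn b * noiseOp r (fun y => (f (Fin.cons true y) - f (Fin.cons false y)) / 2) x := by
  simp only [noiseOp_eq_cubeExpect_mul_noiseKernel]
  rw [cubeExpect_succ]
  simp only [noiseKernel_cons, cubeExpect, ← add_div, div_div, mul_div_assoc', ← sum_add_distrib,
    mul_sum]
  rw [div_eq_div_iff (by positivity) (by positivity), sum_mul, sum_mul]
  refine sum_congr rfl fun y _ => ?_
  cases b <;> simp only [sgn, Bool.false_eq_true, if_true, if_false] <;> ring

end Fourier

section Hypercontractivity

variable {n : ℕ}

lemma cubeExpect_sq_add_sq_rpow_le {q : ℝ} (hq : 2 ≤ q) (A B : (Fin n → Bool) → ℝ) :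
    (cubeExpect fun x => (A x ^ 2 + B x ^ 2) ^ (q / 2))
      ≤ ((cubeExpect fun x => |A x| ^ q) ^ (q / 2)⁻¹
        + (cubeExpect fun x => |B x| ^ q) ^ (q / 2)⁻¹) ^ (q / 2) := by
  have hE : ∀ g : (Fin n → Bool) → ℝ, 0 ≤ cubeExpect fun x => |g x| ^ q :=
    fun g => cubeExpect_nonneg fun x => rpow_nonneg (abs_nonneg _) q
  have := cubeExpect_add_rpow_le (p := q / 2) (by linarith) (u := fun x => A x ^ 2)
    (v := fun x => B x ^ 2) (fun _ => sq_nonneg _) (fun _ => sq_nonneg _)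
  simp only [sq_rpow_div_two, one_div] at this
  exact (rpow_inv_le_iff_of_pos (cubeExpect_nonneg fun x => rpow_nonneg (by positivity) _)
    (add_nonneg (rpow_nonneg (hE A) _) (rpow_nonneg (hE B) _)) (by linarith)).1 this

lemma cubeExpect_abs_noiseOp_rpow_succ (r q : ℝ) (f : (Fin (n + 1) → Bool) → ℝ) :
    cubeExpect (fun z => |noiseOp r f z| ^ q)
      = cubeExpect fun x =>
        (|noiseOp r (fun y => (f (Fin.cons true y) + f (Fin.cons false y)) / 2) x
            + r * noiseOp r (fun y => (f (Fin.cons true y) - f (Fin.cons false y)) / 2) x| ^ q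
          + |noiseOp r (fun y => (f (Fin.cons true y) + f (Fin.cons false y)) / 2) x
            - r * noiseOp r (fun y => (f (Fin.cons true y) - f (Fin.cons false y)) / 2) x| ^ q)
          / 2 := by
  rw [cubeExpect_succ, cubeExpect_div_const, cubeExpect_add]
  simp only [noiseOp_cons, sgn, if_true, Bool.false_eq_true, if_false, mul_one, mul_neg_one,
    neg_mul, ← sub_eq_add_neg]

theorem cubeExpect_abs_noiseOp_rpow_le {q r : ℝ} (hq : 2 ≤ q) (hr : r ^ 2 * (q - 1) ≤ 1)
    (f : (Fin n → Bool) → ℝ) :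
    cubeExpect (fun x => |noiseOp r f x| ^ q) ≤ (cubeExpect fun x => f x ^ 2) ^ (q / 2) := by
  have hq2 : 0 < q / 2 := by linarith
  induction n with
  | zero =>
    simp [noiseOp_eq_cubeExpect_mul_noiseKernel, noiseKernel, cubeExpect, sq_rpow_div_two]
  | succ n ih =>
    set f₀ := fun y => (f (Fin.cons true y) + f (Fin.cons false y)) / 2
    set f₁ := fun y => (f (Fin.cons true y) - f (Fin.cons false y)) / 2
    have hE : ∀ g : (Fin n → Bool) → ℝ, 0 ≤ cubeExpect fun x => |noiseOp r g x| ^ q :=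
      fun g => cubeExpect_nonneg fun x => rpow_nonneg (abs_nonneg _) q
    have hnorm : ∀ g, (cubeExpect fun x => |noiseOp r g x| ^ q) ^ (q / 2)⁻¹
        ≤ cubeExpect fun x => g x ^ 2 := fun g =>
      (rpow_inv_le_iff_of_pos (hE g) (cubeExpect_nonneg fun x => sq_nonneg _) hq2).2 (ih g)
    calc cubeExpect (fun z => |noiseOp r f z| ^ q)
        ≤ cubeExpect fun x => (noiseOp r f₀ x ^ 2 + noiseOp r f₁ x ^ 2) ^ (q / 2) := by
          rw [cubeExpect_abs_noiseOp_rpow_succ]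
          exact cubeExpect_mono fun x => by
            linarith [abs_add_mul_rpow_add_abs_sub_mul_rpow_le hq hr (noiseOp r f₀ x)
              (noiseOp r f₁ x)]
      _ ≤ ((cubeExpect fun x => |noiseOp r f₀ x| ^ q) ^ (q / 2)⁻¹
          + (cubeExpect fun x => |noiseOp r f₁ x| ^ q) ^ (q / 2)⁻¹) ^ (q / 2) :=
          cubeExpect_sq_add_sq_rpow_le hq _ _
      _ ≤ (cubeExpect (fun x => f₀ x ^ 2) + cubeExpect (fun x => f₁ x ^ 2)) ^ (q / 2) :=
          rpow_le_rpow (add_nonneg (rpow_nonneg (hE f₀) _) (rpow_nonneg (hE f₁) _))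
            (add_le_add (hnorm f₀) (hnorm f₁)) hq2.le
      _ = (cubeExpect fun z => f z ^ 2) ^ (q / 2) := by rw [cubeExpect_sq_succ]

lemma cubeNorm_two (f : (Fin n → Bool) → ℝ) :
    cubeNorm 2 f = (cubeExpect fun x => f x ^ 2) ^ (1 / 2 : ℝ) := by
  rw [cubeNorm]
  congr 2
  funext x
  rw [← sq_rpow_div_two, div_self two_ne_zero, rpow_one]

theorem cubeNorm_noiseOp_le_cubeNorm_two {q r : ℝ} (hq : 2 ≤ q) (hr : r ^ 2 * (q - 1) ≤ 1)
    (f : (Fin n → Bool) → ℝ) : cubeNorm q (noiseOp r f) ≤ cubeNorm 2 f := by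
  have hq0 : 0 < q := by linarith
  calc cubeNorm q (noiseOp r f)
      ≤ ((cubeExpect fun x => f x ^ 2) ^ (q / 2)) ^ (1 / q) :=
        rpow_le_rpow (cubeExpect_nonneg fun x => rpow_nonneg (abs_nonneg _) _)
          (cubeExpect_abs_noiseOp_rpow_le hq hr f) (by positivity)
    _ = cubeNorm 2 f := by
        rw [cubeNorm_two, ← rpow_mul (cubeExpect_nonneg fun x => sq_nonneg _)]
        congr 1
        field_simp

end Hypercontractivity

section Interpolation

variable {n : ℕ}

lemma cubeNorm_le_cubeNorm_of_exponent_le {p p' : ℝ} (hp : 0 < p) (hpp' : p ≤ p')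
    (f : (Fin n → Bool) → ℝ) : cubeNorm p f ≤ cubeNorm p' f := by
  have hp' : 0 < p' := hp.trans_le hpp'
  have hE : 0 ≤ cubeExpect fun x => |f x| ^ p :=
    cubeExpect_nonneg fun x => rpow_nonneg (abs_nonneg _) _
  have hjensen : (cubeExpect fun x => |f x| ^ p) ^ (p' / p) ≤ cubeExpect fun x => |f x| ^ p' := by
    simp only [cubeExpect_eq_sum_mul]
    convert rpow_arith_mean_le_arith_mean_rpow univ (fun _ => (2 ^ n : ℝ)⁻¹)
      (fun x => |f x| ^ p) (fun _ _ => by positivity) (by simp)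
      (fun x _ => rpow_nonneg (abs_nonneg _) _) ((one_le_div hp).2 hpp') using 3
    rw [← rpow_mul (abs_nonneg _), mul_div_cancel₀ _ hp.ne']
  calc cubeNorm p f = ((cubeExpect fun x => |f x| ^ p) ^ (p' / p)) ^ (1 / p') := by
        rw [cubeNorm, ← rpow_mul hE]
        congr 1
        field_simp
    _ ≤ cubeNorm p' f := rpow_le_rpow (rpow_nonneg hE _) hjensen (by positivity)

theorem cubeNorm_two_noiseOp_rpow_le {ρ lam : ℝ} (hρ : 0 ≤ ρ) (hlam0 : 0 ≤ lam) (hlam1 : lam ≤ 1)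
    (f : (Fin n → Bool) → ℝ) :
    cubeNorm 2 (noiseOp (ρ ^ (1 - lam)) f)
      ≤ cubeNorm 2 (noiseOp ρ f) ^ (1 - lam) * cubeNorm 2 f ^ lam := by
  have hX : 0 ≤ ∑ S : Finset (Fin n), (ρ ^ S.card) ^ 2 * fourierCoef f S ^ 2 := by positivity
  have hY : 0 ≤ ∑ S : Finset (Fin n), fourierCoef f S ^ 2 := by positivity
  have hweight : ∀ S : Finset (Fin n),
      ((ρ ^ (1 - lam)) ^ S.card) ^ 2 = ((ρ ^ S.card) ^ 2) ^ (1 - lam) := fun S => by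
    simp only [← rpow_natCast, ← rpow_mul hρ]
    ring_nf
  have hinterp := sum_rpow_one_sub_mul_le univ (fun S => sq_nonneg (ρ ^ S.card))
    (fun S => sq_nonneg (fourierCoef f S)) hlam0 hlam1
  simp only [cubeNorm_two, cubeExpect_sq_noiseOp, cubeExpect_sq_eq_sum_fourierCoef_sq, hweight,
    ← rpow_mul hX, ← rpow_mul hY]
  calc (∑ S, ((ρ ^ S.card) ^ 2) ^ (1 - lam) * fourierCoef f S ^ 2) ^ (1 / 2 : ℝ)
      ≤ ((∑ S, (ρ ^ S.card) ^ 2 * fourierCoef f S ^ 2) ^ (1 - lam)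
          * (∑ S, fourierCoef f S ^ 2) ^ lam) ^ (1 / 2 : ℝ) :=
        rpow_le_rpow (sum_nonneg fun S _ => by positivity) hinterp (by norm_num)
    _ = _ := by
        rw [mul_rpow (rpow_nonneg hX _) (rpow_nonneg hY _), ← rpow_mul hX, ← rpow_mul hY,
          mul_comm (1 - lam), mul_comm lam]

end Interpolation

theorem modified_hypercontractivity_general (n : ℕ) (ρ q lam : ℝ)
    (hρ0 : 0 ≤ ρ) (hρ1 : ρ ≤ 1) (hq : 1 < q) (hlam0 : 0 ≤ lam) (hlam1 : lam ≤ 1)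
    (hcond : ρ ^ lam * Real.sqrt (q - 1) ≤ 1) :
    ∀ f : (Fin n → Bool) → ℝ,
      cubeNorm q (noiseOp ρ f) ≤
        cubeNorm 2 (noiseOp ρ f) ^ (1 - lam) * cubeNorm 2 f ^ lam := by
  intro f
  have hr : (ρ ^ lam) ^ 2 * (max q 2 - 1) ≤ 1 := by
    rcases le_total q 2 with hq2 | hq2
    · rw [max_eq_right hq2]
      nlinarith [rpow_nonneg hρ0 lam, rpow_le_one hρ0 hρ1 hlam0]
    · rw [max_eq_left hq2, ← sq_sqrt (by linarith : 0 ≤ q - 1), ← mul_pow]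
      exact pow_le_one₀ (mul_nonneg (rpow_nonneg hρ0 lam) (sqrt_nonneg _)) hcond
  have hρ : ρ ^ lam * ρ ^ (1 - lam) = ρ := by
    rw [← rpow_add' hρ0 (by norm_num), add_sub_cancel, rpow_one]
  calc cubeNorm q (noiseOp ρ f)
      ≤ cubeNorm (max q 2) (noiseOp ρ f) :=
        cubeNorm_le_cubeNorm_of_exponent_le (by linarith) (le_max_left q 2) _
    _ = cubeNorm (max q 2) (noiseOp (ρ ^ lam) (noiseOp (ρ ^ (1 - lam)) f)) := by
        rw [noiseOp_noiseOp, hρ]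
    _ ≤ cubeNorm 2 (noiseOp (ρ ^ (1 - lam)) f) :=
        cubeNorm_noiseOp_le_cubeNorm_two (le_max_right q 2) hr _
    _ ≤ cubeNorm 2 (noiseOp ρ f) ^ (1 - lam) * cubeNorm 2 f ^ lam :=
        cubeNorm_two_noiseOp_rpow_le hρ0 hlam0 hlam1 f

/-- **Modified hypercontractive inequality**: if `0 ≤ ρ ≤ 1`, `q > 1` and `0 ≤ λ ≤ 1`
satisfy `ρ^λ·√(q−1) ≤ 1` (real power, with `0^0 = 1`), then every `f : {-1,1}^n → ℝ`
satisfies `‖T_ρ f‖_q ≤ ‖T_ρ f‖₂^{1−λ}·‖f‖₂^λ`. -/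
theorem modified_hypercontractivity (n : ℕ) (hn : 1 ≤ n) (ρ q lam : ℝ)
    (hρ0 : 0 ≤ ρ) (hρ1 : ρ ≤ 1) (hq : 1 < q) (hlam0 : 0 ≤ lam) (hlam1 : lam ≤ 1)
    (hcond : ρ ^ lam * Real.sqrt (q - 1) ≤ 1) :
    ∀ f : (Fin n → Bool) → ℝ,
      cubeNorm q (noiseOp ρ f) ≤
        cubeNorm 2 (noiseOp ρ f) ^ (1 - lam) * cubeNorm 2 f ^ lam :=
  modified_hypercontractivity_general n ρ q lam hρ0 hρ1 hq hlam0 hlam1 hcond
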